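/- arXiv:1910.14363 — 2 statements merged into one kernel-verified Lean document; each statement's English description precedes it below -/
import Mathlib

section
/- Let (R,μ) be a Hopf-Galois algebra and let A_R = A(R,X,Y,τ,ω,c,ξ) be a Hopf-Galois extension of (R,μ) as in Theorem mainmain, with associated quasi-central group-likes g, h. Then: (1) H̲(R) ⊆ H̲(A_R); (2) (g⊗g^{-1})(h⊗h^{-1}) = (h⊗h^{-1})(g⊗g^{-1}) in R^op ⊗ R; (3) for every r⊗s ∈ H̲(R), τ(r)⊗τ(s) = r⊗s and ω(r)⊗ω(s) = r⊗s; (4) for every r⊗s ∈ H̲(R), g·r ⊗ τ(s) ∈ H̲(R) and h·r ⊗ ω(s) ∈ H̲(R), hence also (gh·r) ⊗ σ(s) ∈ H̲(R) where σ = τω. -/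
open TensorProduct MulOpposite

set_option synthInstance.maxHeartbeats 1000000
set_option maxHeartbeats 1000000

noncomputable section

universe u v w

section Maps

variable (k : Type u) [Field k] (R : Type v) [Ring R] [Algebra k R]

/-- `unop` as a `k`-linear map. -/
def unopL : Rᵐᵒᵖ →ₗ[k] R :=
  ((opLinearEquiv k : R ≃ₗ[k] Rᵐᵒᵖ)).symm.toLinearMap

/-- `op` as a `k`-linear map. -/
def opL : R →ₗ[k] Rᵐᵒᵖ :=
  (opLinearEquiv k : R ≃ₗ[k] Rᵐᵒᵖ).toLinearMap

/-- `Rᵐᵒᵖ ⊗ R → R`, `op x ⊗ y ↦ x * y`. -/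
def opMulL : Rᵐᵒᵖ ⊗[k] R →ₗ[k] R :=
  LinearMap.mul' k R ∘ₗ LinearMap.rTensor R (unopL k R)

/-- `R ⊗ Rᵐᵒᵖ → R`, `x ⊗ op y ↦ x * y`. -/
def mulOpL : R ⊗[k] Rᵐᵒᵖ →ₗ[k] R :=
  LinearMap.mul' k R ∘ₗ LinearMap.lTensor R (unopL k R)

/-- Conjugation `r ↦ g r g⁻¹` as a `k`-linear map. -/
def conjL (g : Rˣ) : R →ₗ[k] R :=
  LinearMap.mulLeft k (g : R) ∘ₗ LinearMap.mulRight k ((g⁻¹ : Rˣ) : R)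

/-- Conjugation on the opposite algebra. -/
def conjOpL (g : Rˣ) : Rᵐᵒᵖ →ₗ[k] Rᵐᵒᵖ :=
  opL k R ∘ₗ conjL k R g ∘ₗ unopL k R

end Maps

/-- A linear map `R →ₗ A` induces `Rᵐᵒᵖ →ₗ Aᵐᵒᵖ`. -/
def opMapL (k : Type u) [Field k] {R : Type v} {A : Type w} [Ring R] [Algebra k R]
    [Ring A] [Algebra k A] (f : R →ₗ[k] A) : Rᵐᵒᵖ →ₗ[k] Aᵐᵒᵖ :=
  opL k A ∘ₗ f ∘ₗ unopL k R

variable (k : Type u) [Field k]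

/-- A Hopf-Galois algebra structure (quantum torsor) on an algebra `R`:
an algebra map `μ : R → R ⊗ Rᵒᵖ ⊗ R` which is coassociative and satisfies the
two counit-type axioms `(m ⊗ id) ∘ μ = η ⊗ id` and `(id ⊗ m) ∘ μ = id ⊗ η`. -/
structure HopfGaloisStr (R : Type v) [Ring R] [Algebra k R] where
  μ : R →ₐ[k] R ⊗[k] (Rᵐᵒᵖ ⊗[k] R)
  coassoc :
    LinearMap.lTensor R (LinearMap.lTensor Rᵐᵒᵖ μ.toLinearMap) ∘ₗ μ.toLinearMap
      = LinearMap.lTensor R (TensorProduct.assoc k Rᵐᵒᵖ R (Rᵐᵒᵖ ⊗[k] R)).toLinearMap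
        ∘ₗ (TensorProduct.assoc k R (Rᵐᵒᵖ ⊗[k] R) (Rᵐᵒᵖ ⊗[k] R)).toLinearMap
        ∘ₗ LinearMap.rTensor (Rᵐᵒᵖ ⊗[k] R) μ.toLinearMap ∘ₗ μ.toLinearMap
  mul12 : ∀ r : R,
    LinearMap.rTensor R (mulOpL k R) ((TensorProduct.assoc k R Rᵐᵒᵖ R).symm (μ r))
      = (1 : R) ⊗ₜ[k] r
  mul23 : ∀ r : R,
    LinearMap.lTensor R (opMulL k R) (μ r) = r ⊗ₜ[k] (1 : R)

namespace HopfGaloisStr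

variable {k} {R : Type v} [Ring R] [Algebra k R]

/-- A group-like element of a Hopf-Galois algebra: an invertible `g` with
`μ(g) = g ⊗ g⁻¹ ⊗ g`. -/
def IsGroupLike (H : HopfGaloisStr k R) (g : Rˣ) : Prop :=
  H.μ (g : R) = (g : R) ⊗ₜ[k] ((op ((g⁻¹ : Rˣ) : R)) ⊗ₜ[k] (g : R))

/-- A `(g,h)`-skew primitive element of a Hopf-Galois algebra:
`μ(x) = x ⊗ h⁻¹ ⊗ h − g ⊗ g⁻¹xh⁻¹ ⊗ h + g ⊗ g⁻¹ ⊗ x`. -/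
def IsSkewPrimitive (H : HopfGaloisStr k R) (g h : Rˣ) (x : R) : Prop :=
  H.μ x = x ⊗ₜ[k] ((op ((h⁻¹ : Rˣ) : R)) ⊗ₜ[k] ((h : Rˣ) : R))
    - (g : R) ⊗ₜ[k] ((op (((g⁻¹ : Rˣ) : R) * x * ((h⁻¹ : Rˣ) : R))) ⊗ₜ[k] (h : R))
    + (g : R) ⊗ₜ[k] ((op ((g⁻¹ : Rˣ) : R)) ⊗ₜ[k] x)

/-- A quasi-central group-like element: there is a character `α` on the
group-likes such that `x g = α(x) g x` for every group-like `x`. -/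
def IsQuasiCentral (H : HopfGaloisStr k R) (g : Rˣ) : Prop :=
  H.IsGroupLike g ∧ ∃ α : Rˣ → kˣ,
    (∀ x y : Rˣ, H.IsGroupLike x → H.IsGroupLike y → α (x * y) = α x * α y) ∧
    ∀ x : Rˣ, H.IsGroupLike x → (x : R) * (g : R) = ((α x : k)) • ((g : R) * (x : R))

end HopfGaloisStr

section HR

variable {k} {R : Type v} [Ring R] [Algebra k R]

/-- The comultiplication-type map on `Rᵐᵒᵖ ⊗ R`:
`x ⊗ y ↦ (x ⊗ y_(1)) ⊗ (y_(2) ⊗ y_(3))`. -/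
def deltaMap (H : HopfGaloisStr k R) :
    Rᵐᵒᵖ ⊗[k] R →ₗ[k] (Rᵐᵒᵖ ⊗[k] R) ⊗[k] (Rᵐᵒᵖ ⊗[k] R) :=
  (TensorProduct.assoc k Rᵐᵒᵖ R (Rᵐᵒᵖ ⊗[k] R)).symm.toLinearMap
    ∘ₗ LinearMap.lTensor Rᵐᵒᵖ H.μ.toLinearMap

/-- The map `x ⊗ y ↦ x y_(1) ⊗ (y_(2) ⊗ y_(3))`. -/
def PhiMap (H : HopfGaloisStr k R) :
    Rᵐᵒᵖ ⊗[k] R →ₗ[k] R ⊗[k] (Rᵐᵒᵖ ⊗[k] R) :=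
  LinearMap.rTensor (Rᵐᵒᵖ ⊗[k] R) (opMulL k R) ∘ₗ deltaMap H

/-- The underlying subspace of the Hopf algebra `H̲(R)` associated to a
Hopf-Galois algebra `R`: the set of `x ⊗ y ∈ Rᵒᵖ ⊗ R` such that
`x y_(1) ⊗ y_(2) ⊗ y_(3) = 1 ⊗ x ⊗ y`. -/
def HRsub (H : HopfGaloisStr k R) : Submodule k (Rᵐᵒᵖ ⊗[k] R) :=
  LinearMap.eqLocus (PhiMap H) ((TensorProduct.mk k R (Rᵐᵒᵖ ⊗[k] R)) 1)

/-- Group-like elements of `H̲(R)`: elements `u ∈ H̲(R)` with `Δ(u) = u ⊗ u`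
and `ε(u) = 1`. -/
def IsGroupLikeHR (H : HopfGaloisStr k R) (u : Rᵐᵒᵖ ⊗[k] R) : Prop :=
  u ∈ HRsub H ∧ deltaMap H u = u ⊗ₜ[k] u ∧ opMulL k R u = 1

/-- `(u₀,u₁)`-skew primitive elements of `H̲(R)`:
elements `x ∈ H̲(R)` with `Δ(x) = x ⊗ u₁ + u₀ ⊗ x`. -/
def IsSkewPrimitiveHR (H : HopfGaloisStr k R) (u₀ u₁ x : Rᵐᵒᵖ ⊗[k] R) : Prop :=
  x ∈ HRsub H ∧ deltaMap H x = x ⊗ₜ[k] u₁ + u₀ ⊗ₜ[k] x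

end HR

/-- A (not necessarily commutative or cocommutative) Hopf algebra structure
on an algebra `H`, spelled out in terms of linear-map identities. -/
structure HopfAlgStr (H : Type w) [Ring H] [Algebra k H] where
  comul : H →ₐ[k] H ⊗[k] H
  counit : H →ₐ[k] k
  coassoc : ∀ x : H,
    (TensorProduct.assoc k H H H) (LinearMap.rTensor H comul.toLinearMap (comul x))
      = LinearMap.lTensor H comul.toLinearMap (comul x)
  counit_id : ∀ x : H,
    (TensorProduct.lid k H) (LinearMap.rTensor H counit.toLinearMap (comul x)) = x
  id_counit : ∀ x : H,
    (TensorProduct.rid k H) (LinearMap.lTensor H counit.toLinearMap (comul x)) = x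
  antipode : H →ₗ[k] H
  antipode_left : ∀ x : H,
    LinearMap.mul' k H (LinearMap.rTensor H antipode (comul x))
      = algebraMap k H (counit x)
  antipode_right : ∀ x : H,
    LinearMap.mul' k H (LinearMap.lTensor H antipode (comul x))
      = algebraMap k H (counit x)

namespace HopfAlgStr

variable {k} {H : Type w} [Ring H] [Algebra k H]

/-- Group-like element of a Hopf algebra. -/
def IsGroupLikeElem (s : HopfAlgStr k H) (g : H) : Prop :=
  s.comul g = g ⊗ₜ[k] g ∧ s.counit g = 1

/-- `(g,h)`-skew primitive element of a Hopf algebra: `Δ(x) = x ⊗ h + g ⊗ x`. -/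
def IsSkewPrim (s : HopfAlgStr k H) (g h x : H) : Prop :=
  s.comul x = x ⊗ₜ[k] h + g ⊗ₜ[k] x

/-- Convolution product of two linear functionals. -/
def conv (s : HopfAlgStr k H) (α β : H →ₗ[k] k) : H →ₗ[k] k :=
  LinearMap.mul' k k ∘ₗ TensorProduct.map α β ∘ₗ s.comul.toLinearMap

/-- The map `r ↦ α(r_(1)) r_(2)`. -/
def sweedL (s : HopfAlgStr k H) (α : H →ₗ[k] k) : H →ₗ[k] H :=
  (TensorProduct.lid k H).toLinearMap ∘ₗ TensorProduct.map α LinearMap.id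
    ∘ₗ s.comul.toLinearMap

/-- The map `r ↦ (g r_(1) g⁻¹) α(r_(2))`. -/
def sweedConj (s : HopfAlgStr k H) (g : Hˣ) (α : H →ₗ[k] k) : H →ₗ[k] H :=
  (TensorProduct.rid k H).toLinearMap ∘ₗ TensorProduct.map (conjL k H g) α
    ∘ₗ s.comul.toLinearMap

end HopfAlgStr

section Galois

variable {k} {R : Type v} [Ring R] [Algebra k R] {H : Type w} [Ring H] [Algebra k H]

/-- The Galois map `R ⊗ R → R ⊗ H`, `r ⊗ s ↦ r s_(0) ⊗ s_(1)`, for a coaction `ρ`. -/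
def canMap (ρ : R →ₐ[k] R ⊗[k] H) : R ⊗[k] R →ₗ[k] R ⊗[k] H :=
  LinearMap.rTensor H (LinearMap.mul' k R)
    ∘ₗ (TensorProduct.assoc k R R H).symm.toLinearMap
    ∘ₗ LinearMap.lTensor R ρ.toLinearMap

/-- `R` is a right Hopf-Galois object over the Hopf algebra `(H, s)` via the
coaction `ρ`: `ρ` is a comodule-algebra structure with trivial coinvariants and
bijective Galois map. -/
structure IsHopfGaloisObject (s : HopfAlgStr k H) (ρ : R →ₐ[k] R ⊗[k] H) : Prop where
  coassoc : ∀ r : R,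
    (TensorProduct.assoc k R H H) (LinearMap.rTensor H ρ.toLinearMap (ρ r))
      = LinearMap.lTensor R s.comul.toLinearMap (ρ r)
  counit : ∀ r : R,
    (TensorProduct.rid k R) (LinearMap.lTensor R s.counit.toLinearMap (ρ r)) = r
  coinvariants : ∀ r : R, ρ r = r ⊗ₜ[k] (1 : H) → ∃ a : k, r = a • (1 : R)
  galois : Function.Bijective (canMap ρ)

end Galois

/-- A presentation of the generalized ambiskew polynomial algebra
`A(R, X, Y, τ, ω, c, ξ)`: an algebra `A` containing `R` (via `i`) and elements
`X, Y` subject to `X r = τ(r) X`, `Y r = ω(r) Y`, `XY − ξ YX = c`, which is a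
free left `R`-module with basis `{Xᵃ Yᵇ}`. -/
structure IsAmbiskew {R : Type v} [Ring R] [Algebra k R]
    (τ ω : R ≃ₐ[k] R) (c : R) (ξ : kˣ)
    {A : Type w} [Ring A] [Algebra k A] (i : R →ₐ[k] A) (X Y : A) : Prop where
  commX : ∀ r : R, X * i r = i (τ r) * X
  commY : ∀ r : R, Y * i r = i (ω r) * Y
  bracket : X * Y - (ξ : k) • (Y * X) = i c
  free : Function.Bijective (fun f : (ℕ × ℕ) →₀ R =>
    f.sum fun p r => i r * X ^ p.1 * Y ^ p.2)

end

noncomputable section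

variable {k : Type u} [Field k]

/-- The conditions of Theorem mainmain on a sextuple `(τ, ω, g, h, c, ξ)`
attached to a Hopf-Galois algebra `(R, μ)`. -/
structure MainMainHyp {R : Type v} [Ring R] [Algebra k R]
    (H : HopfGaloisStr k R) (τ ω : R ≃ₐ[k] R) (g h : Rˣ) (c : R) (ξ : kˣ) :
    Prop where
  /-- `τ` and `ω` commute. -/
  comm : ∀ r : R, τ (ω r) = ω (τ r)
  /-- `τ(r)_(1) ⊗ τ(r)_(2) ⊗ τ(r)_(3) = τ(r_(1)) ⊗ r_(2) ⊗ r_(3)`. -/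
  idτ1 : ∀ r : R,
    H.μ (τ r) = LinearMap.rTensor (Rᵐᵒᵖ ⊗[k] R) τ.toLinearMap (H.μ r)
  /-- `τ(r)_(1) ⊗ τ(r)_(2) ⊗ τ(r)_(3) = τ(r_(1)) ⊗ τ(r_(2)) ⊗ τ(r_(3))`. -/
  idτ2 : ∀ r : R,
    H.μ (τ r) = TensorProduct.map τ.toLinearMap
      (TensorProduct.map (opMapL k τ.toLinearMap) τ.toLinearMap) (H.μ r)
  /-- `ω(r)_(1) ⊗ ω(r)_(2) ⊗ ω(r)_(3) = ω(r_(1)) ⊗ r_(2) ⊗ r_(3)`. -/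
  idω1 : ∀ r : R,
    H.μ (ω r) = LinearMap.rTensor (Rᵐᵒᵖ ⊗[k] R) ω.toLinearMap (H.μ r)
  /-- `ω(r)_(1) ⊗ ω(r)_(2) ⊗ ω(r)_(3) = ω(r_(1)) ⊗ ω(r_(2)) ⊗ ω(r_(3))`. -/
  idω2 : ∀ r : R,
    H.μ (ω r) = TensorProduct.map ω.toLinearMap
      (TensorProduct.map (opMapL k ω.toLinearMap) ω.toLinearMap) (H.μ r)
  /-- `g` is a quasi-central group-like element. -/
  qcg : H.IsQuasiCentral g
  /-- `h` is a quasi-central group-like element. -/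
  qch : H.IsQuasiCentral h
  /-- `g·r_(1) ⊗ g·r_(2) ⊗ r_(3) = τ(r_(1)) ⊗ τ(r_(2)) ⊗ r_(3)`. -/
  idg : ∀ r : R,
    TensorProduct.map (conjL k R g) (LinearMap.rTensor R (conjOpL k R g)) (H.μ r)
      = TensorProduct.map τ.toLinearMap
          (LinearMap.rTensor R (opMapL k τ.toLinearMap)) (H.μ r)
  /-- `h·r_(1) ⊗ h·r_(2) ⊗ r_(3) = ω(r_(1)) ⊗ ω(r_(2)) ⊗ r_(3)`. -/
  idh : ∀ r : R,
    TensorProduct.map (conjL k R h) (LinearMap.rTensor R (conjOpL k R h)) (H.μ r)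
      = TensorProduct.map ω.toLinearMap
          (LinearMap.rTensor R (opMapL k ω.toLinearMap)) (H.μ r)
  /-- `τ(h) = ξ h`. -/
  ξh : τ ((h : Rˣ) : R) = (ξ : k) • ((h : Rˣ) : R)
  /-- `ω(g) = ξ⁻¹ g`. -/
  ξg : ω ((g : Rˣ) : R) = ((ξ⁻¹ : kˣ) : k) • ((g : Rˣ) : R)
  /-- `c` is `σ`-central for `σ = τω`. -/
  sc : ∀ r : R, c * r = τ (ω r) * c
  /-- `c` is `(gh, 1)`-skew primitive. -/
  prim : H.IsSkewPrimitive (g * h) 1 c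

/-- The Hopf-Galois structure `HA` on `A` extends `(R, μ)` along `i`. -/
def ExtendsHG {R : Type v} [Ring R] [Algebra k R] {A : Type w} [Ring A]
    [Algebra k A] (H : HopfGaloisStr k R) (HA : HopfGaloisStr k A)
    (i : R →ₐ[k] A) : Prop :=
  ∀ r : R, HA.μ (i r) = TensorProduct.map i.toLinearMap
    (TensorProduct.map (opMapL k i.toLinearMap) i.toLinearMap) (H.μ r)

/-- The formula `μ(X) = X⊗1⊗1 − g ⊗ g⁻¹X ⊗ 1 + g ⊗ g⁻¹ ⊗ X`. -/
def MuFormula {R : Type v} [Ring R] [Algebra k R] {A : Type w} [Ring A]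
    [Algebra k A] (HA : HopfGaloisStr k A) (i : R →ₐ[k] A) (g : Rˣ) (X : A) :
    Prop :=
  HA.μ X = X ⊗ₜ[k] ((MulOpposite.op (1 : A)) ⊗ₜ[k] (1 : A))
    - i ((g : Rˣ) : R) ⊗ₜ[k]
        ((MulOpposite.op (i (((g⁻¹ : Rˣ)) : R) * X)) ⊗ₜ[k] (1 : A))
    + i ((g : Rˣ) : R) ⊗ₜ[k]
        ((MulOpposite.op (i (((g⁻¹ : Rˣ)) : R))) ⊗ₜ[k] X)

/-- The map `Rᵒᵖ ⊗ R → Aᵒᵖ ⊗ A` induced by `i : R → A`. -/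
def incl2 {R : Type v} [Ring R] [Algebra k R] {A : Type w} [Ring A]
    [Algebra k A] (i : R →ₐ[k] A) : Rᵐᵒᵖ ⊗[k] R →ₗ[k] Aᵐᵒᵖ ⊗[k] A :=
  TensorProduct.map (opMapL k i.toLinearMap) i.toLinearMap

/-- The map `r ⊗ s ↦ (g·r) ⊗ τ(s)` on `Rᵒᵖ ⊗ R` (conjugation on the first leg). -/
def hrAuto {R : Type v} [Ring R] [Algebra k R] (g : Rˣ) (τ : R ≃ₐ[k] R) :
    Rᵐᵒᵖ ⊗[k] R →ₗ[k] Rᵐᵒᵖ ⊗[k] R :=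
  TensorProduct.map (conjOpL k R g) τ.toLinearMap

/-- The element `φ(g) = g⁻¹ ⊗ g` of `Rᵒᵖ ⊗ R`. -/
def phiEl {R : Type v} [Ring R] [Algebra k R] (g : Rˣ) : Rᵐᵒᵖ ⊗[k] R :=
  (MulOpposite.op (((g⁻¹ : Rˣ)) : R)) ⊗ₜ[k] ((g : Rˣ) : R)

end

noncomputable section AuxProofs

variable {k : Type u} [Field k] {R : Type v} [Ring R] [Algebra k R]

@[simp] lemma unopL_apply' (x : Rᵐᵒᵖ) : unopL k R x = x.unop := rfl

@[simp] lemma opL_apply' (x : R) : opL k R x = op x := rfl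

@[simp] lemma opMulL_tmul' (x : Rᵐᵒᵖ) (y : R) :
    opMulL k R (x ⊗ₜ[k] y) = x.unop * y := rfl

@[simp] lemma conjL_apply' (g : Rˣ) (r : R) :
    conjL k R g r = (g : R) * (r * ((g⁻¹ : Rˣ) : R)) := rfl

@[simp] lemma conjOpL_apply' (g : Rˣ) (x : Rᵐᵒᵖ) :
    conjOpL k R g x = op ((g : R) * (x.unop * ((g⁻¹ : Rˣ) : R))) := rfl

@[simp] lemma opMapL_apply' {A : Type w} [Ring A] [Algebra k A]
    (f : R →ₗ[k] A) (x : Rᵐᵒᵖ) : opMapL k f x = op (f x.unop) := rfl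

/-- Injectivity of `u ↦ 1 ⊗ u` over a field when `1 ≠ 0`. -/
lemma one_tmul_inj [Nontrivial R] {M : Type w} [AddCommGroup M] [Module k M]
    {u v : M} (hh : (1 : R) ⊗ₜ[k] u = (1 : R) ⊗ₜ[k] v) : u = v := by
  obtain ⟨f, hf⟩ : ∃ f : R →ₗ[k] k, f 1 = 1 := by
    have hinj : LinearMap.ker (LinearMap.toSpanSingleton k R 1) = ⊥ := by
      rw [LinearMap.ker_eq_bot]
      intro a b hab
      have : a • (1 : R) = b • (1 : R) := hab
      have h2 : (a - b) • (1 : R) = 0 := by rw [sub_smul, this, sub_self]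
      rcases smul_eq_zero.mp h2 with h3 | h3
      · exact sub_eq_zero.mp h3
      · exact absurd h3 one_ne_zero
    obtain ⟨f, hf⟩ :=
      (LinearMap.toSpanSingleton k R 1).exists_leftInverse_of_injective hinj
    refine ⟨f, ?_⟩
    have := LinearMap.congr_fun hf 1
    simpa [LinearMap.toSpanSingleton] using this
  have := congrArg
    (fun t => (TensorProduct.lid k M) (TensorProduct.map f LinearMap.id t)) hh
  simpa [hf] using this

/-- The key compatibility lemma for `Φ`. -/
lemma phi_comp {A : Type w} [Ring A] [Algebra k A]
    (H : HopfGaloisStr k R) (HA : HopfGaloisStr k A)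
    (p p₂ : Rᵐᵒᵖ →ₗ[k] Aᵐᵒᵖ) (q q' m q₂ : R →ₗ[k] A)
    (hμ : ∀ r, HA.μ (q r)
      = TensorProduct.map q' (TensorProduct.map p₂ q₂) (H.μ r))
    (hm : ∀ x a : R, (p (op x)).unop * q' a = m (x * a)) :
    ∀ z : Rᵐᵒᵖ ⊗[k] R,
      PhiMap HA (TensorProduct.map p q z)
        = TensorProduct.map m (TensorProduct.map p₂ q₂) (PhiMap H z) := by
  intro z
  induction z using TensorProduct.induction_on with
  | zero => simp
  | add u v hu hv => simp only [map_add, hu, hv]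
  | tmul w y =>
    simp only [TensorProduct.map_tmul, PhiMap, deltaMap, LinearMap.comp_apply,
      LinearEquiv.coe_coe, LinearMap.lTensor_tmul, AlgHom.toLinearMap_apply,
      hμ]
    generalize H.μ y = t
    induction t using TensorProduct.induction_on with
    | zero => simp
    | add u v hu hv => simp only [map_add, TensorProduct.tmul_add, hu, hv]
    | tmul a s =>
      simp only [TensorProduct.map_tmul, TensorProduct.assoc_symm_tmul,
        LinearMap.rTensor_tmul, opMulL_tmul']
      rw [show w = op w.unop from rfl, hm w.unop a]
      simp

/-- Decomposition of a triple tensor map. -/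
lemma map_decomp (f : R →ₗ[k] R) (F : Rᵐᵒᵖ →ₗ[k] Rᵐᵒᵖ) (f3 : R →ₗ[k] R) :
    TensorProduct.map f (TensorProduct.map F f3)
      = (LinearMap.lTensor R (LinearMap.lTensor Rᵐᵒᵖ f3))
          ∘ₗ TensorProduct.map f (LinearMap.rTensor R F) := by
  apply TensorProduct.ext'
  intro x w
  induction w using TensorProduct.induction_on with
  | zero => simp
  | add u v hu hv => simp only [TensorProduct.tmul_add, map_add, hu, hv]
  | tmul a b => simp

end AuxProofs

/-- **Lemma H(A).** Let `A_R = A(R,X,Y,τ,ω,c,ξ)` be a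
Hopf-Galois extension of `(R,μ)` as in Theorem mainmain, with quasi-central
group-likes `g, h`.  Then: (1) `H̲(R) ⊆ H̲(A_R)`;
(2) `(g⊗g⁻¹)(h⊗h⁻¹) = (h⊗h⁻¹)(g⊗g⁻¹)` in `Rᵒᵖ ⊗ R`;
(3) `τ ⊗ τ` and `ω ⊗ ω` are the identity on `H̲(R)`;
(4) `H̲(R)` is stable under `r⊗s ↦ g·r ⊗ τ(s)`, `r⊗s ↦ h·r ⊗ ω(s)`, hence
under `r⊗s ↦ gh·r ⊗ σ(s)` for `σ = τω`. -/
theorem stmt13 {k : Type u} [Field k] {R : Type v} [Ring R] [Algebra k R]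
    [Nontrivial R] (H : HopfGaloisStr k R)
    (τ ω : R ≃ₐ[k] R) (g h : Rˣ) (c : R) (ξ : kˣ)
    (hyp : MainMainHyp H τ ω g h c ξ)
    {A : Type w} [Ring A] [Algebra k A] (i : R →ₐ[k] A) (X Y : A)
    (hA : IsAmbiskew k τ ω c ξ i X Y)
    (HA : HopfGaloisStr k A) (hext : ExtendsHG H HA i)
    (hX : MuFormula HA i g X) (hY : MuFormula HA i h Y) :
    -- (1) `H̲(R) ⊆ H̲(A_R)`
    (∀ z ∈ HRsub H, incl2 i z ∈ HRsub HA) ∧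
    -- (2) `(g ⊗ g⁻¹)(h ⊗ h⁻¹) = (h ⊗ h⁻¹)(g ⊗ g⁻¹)` in `Rᵒᵖ ⊗ R`
    ((MulOpposite.op ((g : Rˣ) : R) ⊗ₜ[k] (((g⁻¹ : Rˣ)) : R) :
        Rᵐᵒᵖ ⊗[k] R)
      * (MulOpposite.op ((h : Rˣ) : R) ⊗ₜ[k] (((h⁻¹ : Rˣ)) : R))
      = (MulOpposite.op ((h : Rˣ) : R) ⊗ₜ[k] (((h⁻¹ : Rˣ)) : R))
        * (MulOpposite.op ((g : Rˣ) : R) ⊗ₜ[k] (((g⁻¹ : Rˣ)) : R))) ∧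
    -- (3) `τ(r) ⊗ τ(s) = r ⊗ s` and `ω(r) ⊗ ω(s) = r ⊗ s` on `H̲(R)`
    (∀ z ∈ HRsub H,
      TensorProduct.map (opMapL k τ.toLinearMap) τ.toLinearMap z = z ∧
      TensorProduct.map (opMapL k ω.toLinearMap) ω.toLinearMap z = z) ∧
    -- (4) stability of `H̲(R)` under `g·(-) ⊗ τ`, `h·(-) ⊗ ω`, `gh·(-) ⊗ σ`
    (∀ z ∈ HRsub H,
      hrAuto g τ z ∈ HRsub H ∧ hrAuto h ω z ∈ HRsub H ∧
      hrAuto (g * h) (ω.trans τ) z ∈ HRsub H) := by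
  classical
  -- Key identities
  have hμτ1 : ∀ r, H.μ (τ r)
      = TensorProduct.map τ.toLinearMap
          (TensorProduct.map LinearMap.id LinearMap.id) (H.μ r) := by
    intro r
    rw [hyp.idτ1 r, TensorProduct.map_id]
    rfl
  have hμω1 : ∀ r, H.μ (ω r)
      = TensorProduct.map ω.toLinearMap
          (TensorProduct.map LinearMap.id LinearMap.id) (H.μ r) := by
    intro r
    rw [hyp.idω1 r, TensorProduct.map_id]
    rfl
  have Kg : ∀ r, H.μ (τ r)
      = TensorProduct.map (conjL k R g)
          (TensorProduct.map (conjOpL k R g) τ.toLinearMap) (H.μ r) := by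
    intro r
    rw [hyp.idτ2 r, map_decomp, map_decomp, LinearMap.comp_apply,
      LinearMap.comp_apply, ← hyp.idg r]
  have Kh : ∀ r, H.μ (ω r)
      = TensorProduct.map (conjL k R h)
          (TensorProduct.map (conjOpL k R h) ω.toLinearMap) (H.μ r) := by
    intro r
    rw [hyp.idω2 r, map_decomp, map_decomp, LinearMap.comp_apply,
      LinearMap.comp_apply, ← hyp.idh r]
  -- Part 1
  have part1 : ∀ z ∈ HRsub H, incl2 i z ∈ HRsub HA := by
    intro z hz
    have hz' : PhiMap H z = (1 : R) ⊗ₜ[k] z := hz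
    have key := phi_comp H HA (opMapL k i.toLinearMap) (opMapL k i.toLinearMap)
      i.toLinearMap i.toLinearMap i.toLinearMap i.toLinearMap hext
      (fun x a => by simp [map_mul]) z
    show PhiMap HA (incl2 i z) = _
    rw [incl2, key, hz', TensorProduct.map_tmul]
    simp only [AlgHom.toLinearMap_apply, map_one]
    rfl
  -- Part 2
  have part2 : ((MulOpposite.op ((g : Rˣ) : R) ⊗ₜ[k] (((g⁻¹ : Rˣ)) : R) :
        Rᵐᵒᵖ ⊗[k] R)
      * (MulOpposite.op ((h : Rˣ) : R) ⊗ₜ[k] (((h⁻¹ : Rˣ)) : R))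
      = (MulOpposite.op ((h : Rˣ) : R) ⊗ₜ[k] (((h⁻¹ : Rˣ)) : R))
        * (MulOpposite.op ((g : Rˣ) : R) ⊗ₜ[k] (((g⁻¹ : Rˣ)) : R))) := by
    obtain ⟨hgl, α, -, hα⟩ := hyp.qch
    have e1 : (g : R) * (h : R) = ((α g : k)) • ((h : R) * (g : R)) :=
      hα g hyp.qcg.1
    set a : kˣ := α g with ha
    have e2 : (h : R) * (g : R) = ((a⁻¹ : kˣ) : k) • ((g : R) * (h : R)) := by
      rw [e1, smul_smul]
      simp
    have e3 : ((g⁻¹ : Rˣ) : R) * ((h⁻¹ : Rˣ) : R)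
        = ((a : kˣ) : k) • (((h⁻¹ : Rˣ) : R) * ((g⁻¹ : Rˣ) : R)) := by
      have hu : (((a : kˣ) : k) • (((h⁻¹ : Rˣ) : R) * ((g⁻¹ : Rˣ) : R)))
          * ((h : R) * (g : R)) = 1 := by
        rw [e2, smul_mul_assoc, mul_smul_comm, smul_smul]
        simp [mul_assoc, Units.inv_mul_cancel_left]
      calc ((g⁻¹ : Rˣ) : R) * ((h⁻¹ : Rˣ) : R)
          = ((g⁻¹ : Rˣ) : R) * ((h⁻¹ : Rˣ) : R)
            * ((((a : kˣ) : k) • (((h⁻¹ : Rˣ) : R) * ((g⁻¹ : Rˣ) : R)))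
              * ((h : R) * (g : R))) := by rw [hu, mul_one]
        _ = (((g⁻¹ : Rˣ) : R) * (((h⁻¹ : Rˣ) : R) * (((h : R) * (g : R))
              * (((a : kˣ) : k) • (((h⁻¹ : Rˣ) : R) * ((g⁻¹ : Rˣ) : R)))))) := by
            have hu2 : ((h : R) * (g : R))
                * (((a : kˣ) : k) • (((h⁻¹ : Rˣ) : R) * ((g⁻¹ : Rˣ) : R)))
                = (((a : kˣ) : k) • (((h⁻¹ : Rˣ) : R) * ((g⁻¹ : Rˣ) : R)))
                  * ((h : R) * (g : R)) := by
              rw [e2]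
              simp only [smul_mul_assoc, mul_smul_comm, smul_smul]
              rw [mul_comm (((a⁻¹ : kˣ) : k)) ((a : kˣ) : k)]
              simp [mul_assoc, Units.mul_inv_cancel_left,
                Units.inv_mul_cancel_left]
            rw [hu2, hu]
            simp [mul_assoc]
        _ = ((a : kˣ) : k) • (((h⁻¹ : Rˣ) : R) * ((g⁻¹ : Rˣ) : R)) := by
            simp [mul_assoc, Units.inv_mul_cancel_left, Units.mul_inv_cancel_left]
    rw [Algebra.TensorProduct.tmul_mul_tmul, Algebra.TensorProduct.tmul_mul_tmul]
    have eop : (op ((g : Rˣ) : R) * op ((h : Rˣ) : R) : Rᵐᵒᵖ)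
        = ((a⁻¹ : kˣ) : k) • (op ((h : Rˣ) : R) * op ((g : Rˣ) : R)) := by
      rw [← op_mul, ← op_mul, ← op_smul, ← e2]
    rw [eop, e3, TensorProduct.smul_tmul, TensorProduct.tmul_smul,
      TensorProduct.tmul_smul, smul_smul]
    simp
  -- Part 3, τ
  have part3τ : ∀ z ∈ HRsub H,
      TensorProduct.map (opMapL k τ.toLinearMap) τ.toLinearMap z = z := by
    intro z hz
    have hz' : PhiMap H z = (1 : R) ⊗ₜ[k] z := hz
    have k1 := phi_comp H H (opMapL k τ.toLinearMap) LinearMap.id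
      τ.toLinearMap τ.toLinearMap τ.toLinearMap LinearMap.id hμτ1
      (fun x a => by simp [map_mul]) z
    have k2 := phi_comp H H (opMapL k τ.toLinearMap) (opMapL k τ.toLinearMap)
      τ.toLinearMap τ.toLinearMap τ.toLinearMap τ.toLinearMap hyp.idτ2
      (fun x a => by simp [map_mul]) z
    rw [k1] at k2
    rw [hz', TensorProduct.map_tmul, TensorProduct.map_tmul,
      TensorProduct.map_id] at k2
    simp only [AlgEquiv.toLinearMap_apply, map_one, LinearMap.id_coe, id_eq] at k2
    exact (one_tmul_inj k2).symm
  -- Part 3, ω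
  have part3ω : ∀ z ∈ HRsub H,
      TensorProduct.map (opMapL k ω.toLinearMap) ω.toLinearMap z = z := by
    intro z hz
    have hz' : PhiMap H z = (1 : R) ⊗ₜ[k] z := hz
    have k1 := phi_comp H H (opMapL k ω.toLinearMap) LinearMap.id
      ω.toLinearMap ω.toLinearMap ω.toLinearMap LinearMap.id hμω1
      (fun x a => by simp [map_mul]) z
    have k2 := phi_comp H H (opMapL k ω.toLinearMap) (opMapL k ω.toLinearMap)
      ω.toLinearMap ω.toLinearMap ω.toLinearMap ω.toLinearMap hyp.idω2
      (fun x a => by simp [map_mul]) z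
    rw [k1] at k2
    rw [hz', TensorProduct.map_tmul, TensorProduct.map_tmul,
      TensorProduct.map_id] at k2
    simp only [AlgEquiv.toLinearMap_apply, map_one, LinearMap.id_coe, id_eq] at k2
    exact (one_tmul_inj k2).symm
  -- Part 4, g
  have part4g : ∀ z ∈ HRsub H, hrAuto g τ z ∈ HRsub H := by
    intro z hz
    have hz' : PhiMap H z = (1 : R) ⊗ₜ[k] z := hz
    have key := phi_comp H H (conjOpL k R g) (conjOpL k R g)
      τ.toLinearMap (conjL k R g) (conjL k R g) τ.toLinearMap Kg
      (fun x a => by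
        simp [mul_assoc, Units.inv_mul_cancel_left]) z
    show PhiMap H (hrAuto g τ z) = _
    rw [hrAuto, key, hz', TensorProduct.map_tmul]
    simp only [conjL_apply', one_mul, Units.mul_inv]
    rfl
  -- Part 4, h
  have part4h : ∀ z ∈ HRsub H, hrAuto h ω z ∈ HRsub H := by
    intro z hz
    have hz' : PhiMap H z = (1 : R) ⊗ₜ[k] z := hz
    have key := phi_comp H H (conjOpL k R h) (conjOpL k R h)
      ω.toLinearMap (conjL k R h) (conjL k R h) ω.toLinearMap Kh
      (fun x a => by
        simp [mul_assoc, Units.inv_mul_cancel_left]) z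
    show PhiMap H (hrAuto h ω z) = _
    rw [hrAuto, key, hz', TensorProduct.map_tmul]
    simp only [conjL_apply', one_mul, Units.mul_inv]
    rfl
  -- Part 4, gh
  have comp4 : ∀ z : Rᵐᵒᵖ ⊗[k] R,
      hrAuto (g * h) (ω.trans τ) z = hrAuto g τ (hrAuto h ω z) := by
    intro z
    induction z using TensorProduct.induction_on with
    | zero => simp
    | add u v hu hv => simp only [map_add, hu, hv]
    | tmul w y =>
      simp only [hrAuto, TensorProduct.map_tmul, conjOpL_apply', unop_op]
      simp [Units.val_mul, mul_inv_rev, mul_assoc, AlgEquiv.toLinearMap_apply,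
        AlgEquiv.trans_apply]
  refine ⟨part1, part2, fun z hz => ⟨part3τ z hz, part3ω z hz⟩,
    fun z hz => ⟨part4g z hz, part4h z hz, ?_⟩⟩
  rw [comp4 z]
  exact part4g _ (part4h z hz)
end

section
/- Let R = k be the trivial Hopf-Galois algebra over a field k. Then the construction of Theorem mainmain (a Hopf-Galois structure on a generalized ambiskew polynomial algebra A(k,X,Y,τ,ω,c,ξ) extending R with μ(X) = X⊗1⊗1 − g⊗g^{-1}X⊗1 + g⊗g^{-1}⊗X and μ(Y) = Y⊗1⊗1 − h⊗h^{-1}Y⊗1 + h⊗h^{-1}⊗Y) produces, up to isomorphism, exactly two algebras: the polynomial Hopf algebra k[X,Y] with X and Y primitive (case c = 0), and the Weyl algebra A₁(k) = k⟨X,Y | XY − YX = 1⟩ with μ(X) = X⊗1⊗1 − 1⊗X⊗1 + 1⊗1⊗X and μ(Y) = Y⊗1⊗1 − 1⊗Y⊗1 + 1⊗1⊗Y. -/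
open TensorProduct MulOpposite

set_option synthInstance.maxHeartbeats 1000000
set_option maxHeartbeats 1000000

/-- The defining relation of the first Weyl algebra `A₁(k)`. -/
inductive weylRel (k : Type u) [Field k] :
    FreeAlgebra k (Fin 2) → FreeAlgebra k (Fin 2) → Prop
  | rel : weylRel k
      (FreeAlgebra.ι k (0 : Fin 2) * FreeAlgebra.ι k (1 : Fin 2)
        - FreeAlgebra.ι k (1 : Fin 2) * FreeAlgebra.ι k (0 : Fin 2)) 1

/-- The first Weyl algebra `A₁(k) = k⟨x,y | xy − yx = 1⟩`. -/
def Weyl (k : Type u) [Field k] : Type u := RingQuot (weylRel k)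

instance (k : Type u) [Field k] : Ring (Weyl k) :=
  inferInstanceAs (Ring (RingQuot (weylRel k)))

instance (k : Type u) [Field k] : Algebra k (Weyl k) :=
  inferInstanceAs (Algebra k (RingQuot (weylRel k)))

namespace Stmt18Aux

variable (k : Type u) [Field k]

/-- The generator `x` of the Weyl algebra. -/
noncomputable def wx : RingQuot (weylRel k) :=
  RingQuot.mkAlgHom k (weylRel k) (FreeAlgebra.ι k 0)

/-- The generator `y` of the Weyl algebra. -/
noncomputable def wy : RingQuot (weylRel k) :=
  RingQuot.mkAlgHom k (weylRel k) (FreeAlgebra.ι k 1)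

lemma wrel : wx k * wy k - wy k * wx k = 1 := by
  have h := RingQuot.mkAlgHom_rel k (weylRel.rel (k := k))
  simpa [wx, wy, map_mul, map_sub, map_one] using h

lemma w_yx : wy k * wx k = wx k * wy k - 1 := by
  have h := wrel k
  rw [sub_eq_iff_eq_add] at h
  rw [h]
  abel

lemma w_y_pow (p : ℕ) :
    wy k * wx k ^ (p + 1) = wx k ^ (p + 1) * wy k - ((p + 1 : ℕ) : k) • wx k ^ p := by
  induction p with
  | zero =>
    simpa [pow_one, pow_zero] using w_yx k
  | succ p ih =>
    have h1 : wy k * wx k ^ (p + 2) = (wy k * wx k ^ (p + 1)) * wx k := by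
      rw [mul_assoc, ← pow_succ]
    rw [h1, ih, sub_mul, mul_assoc (wx k ^ (p + 1)) (wy k) (wx k), w_yx,
      smul_mul_assoc, ← pow_succ, mul_sub, mul_one, ← mul_assoc, ← pow_succ]
    have h2 : ((p + 1 + 1 : ℕ) : k) • wx k ^ (p + 1)
        = ((p + 1 : ℕ) : k) • wx k ^ (p + 1) + wx k ^ (p + 1) := by
      push_cast
      rw [add_smul, one_smul]
    rw [h2]
    abel

lemma mem_span (a : RingQuot (weylRel k)) :
    a ∈ Submodule.span k
      (Set.range fun pq : ℕ × ℕ => wx k ^ pq.1 * wy k ^ pq.2) := by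
  set S := Submodule.span k
      (Set.range fun pq : ℕ × ℕ => wx k ^ pq.1 * wy k ^ pq.2) with hS
  have hone : (1 : RingQuot (weylRel k)) ∈ S :=
    Submodule.subset_span ⟨(0, 0), by simp⟩
  have hxS : ∀ s ∈ S, wx k * s ∈ S := by
    intro s hs
    induction hs using Submodule.span_induction with
    | mem z hz =>
      obtain ⟨⟨p, q⟩, rfl⟩ := hz
      exact Submodule.subset_span ⟨(p + 1, q), by simp [pow_succ', mul_assoc]⟩
    | zero => simpa using S.zero_mem
    | add x y _ _ hx hy => simpa [mul_add] using S.add_mem hx hy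
    | smul t x _ hx => simpa [mul_smul_comm] using S.smul_mem t hx
  have hyS : ∀ s ∈ S, wy k * s ∈ S := by
    intro s hs
    induction hs using Submodule.span_induction with
    | mem z hz =>
      obtain ⟨⟨p, q⟩, rfl⟩ := hz
      match p with
      | 0 =>
        refine Submodule.subset_span ⟨(0, q + 1), ?_⟩
        simp [pow_succ', mul_assoc]
      | p + 1 =>
        have : wy k * (wx k ^ (p + 1) * wy k ^ q)
            = wx k ^ (p + 1) * wy k ^ (q + 1)
              - ((p + 1 : ℕ) : k) • (wx k ^ p * wy k ^ q) := by
          rw [← mul_assoc, w_y_pow, sub_mul, smul_mul_assoc, mul_assoc, ← pow_succ']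
        rw [this]
        exact S.sub_mem (Submodule.subset_span ⟨(p + 1, q + 1), rfl⟩)
          (S.smul_mem _ (Submodule.subset_span ⟨(p, q), rfl⟩))
    | zero => simpa using S.zero_mem
    | add x y _ _ hx hy => simpa [mul_add] using S.add_mem hx hy
    | smul t x _ hx => simpa [mul_smul_comm] using S.smul_mem t hx
  obtain ⟨w, rfl⟩ := RingQuot.mkAlgHom_surjective k (weylRel k) a
  have key : ∀ w : FreeAlgebra k (Fin 2), ∀ s ∈ S,
      RingQuot.mkAlgHom k (weylRel k) w * s ∈ S := by
    intro w
    induction w using FreeAlgebra.induction with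
    | grade0 r =>
      intro s hs
      rw [AlgHom.commutes, ← Algebra.smul_def]
      exact S.smul_mem r hs
    | grade1 j =>
      intro s hs
      fin_cases j
      · exact hxS s hs
      · exact hyS s hs
    | mul a b ha hb =>
      intro s hs
      rw [map_mul, mul_assoc]
      exact ha _ (hb s hs)
    | add a b ha hb =>
      intro s hs
      rw [map_add, add_mul]
      exact S.add_mem (ha s hs) (hb s hs)
  simpa using key w 1 hone

end Stmt18Aux

/-- **baby example `R = k`.** Over the trivial Hopf-Galois
algebra `R = k`, the construction of Theorem mainmain produces, up to
isomorphism, exactly two algebras: the polynomial algebra `k[X,Y]`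
(when `c = 0`) and the Weyl algebra `A₁(k)` (when `c ≠ 0`). -/
theorem stmt18 {k : Type u} [Field k] (H : HopfGaloisStr k k)
    (τ ω : k ≃ₐ[k] k) (g h : kˣ) (c : k) (ξ : kˣ)
    (hyp : MainMainHyp H τ ω g h c ξ)
    {A : Type w} [Ring A] [Algebra k A] (i : k →ₐ[k] A) (X Y : A)
    (hA : IsAmbiskew k τ ω c ξ i X Y)
    (HA : HopfGaloisStr k A) (hext : ExtendsHG H HA i)
    (hX : MuFormula HA i g X) (hY : MuFormula HA i h Y) :
    (c = 0 ∧ Nonempty (A ≃ₐ[k] MvPolynomial (Fin 2) k)) ∨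
    (c ≠ 0 ∧ Nonempty (A ≃ₐ[k] Weyl k)) := by
  classical
  have hi : ∀ r : k, i r = algebraMap k A r := fun r => by
    simpa using i.commutes r
  -- `ξ = 1` since `τ = id` on `k` and `τ(h) = ξ h` with `h` invertible.
  have hξ : (ξ : k) = 1 := by
    have h1 : τ ((h : kˣ) : k) = ((h : kˣ) : k) := by
      simpa using τ.commutes ((h : kˣ) : k)
    have h2 := hyp.ξh
    rw [h1, smul_eq_mul] at h2
    have hh : ((h : kˣ) : k) ≠ 0 := h.ne_zero
    exact (mul_right_cancel₀ hh (by rw [one_mul, ← h2])).symm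
  have hbr : X * Y - Y * X = c • (1 : A) := by
    have hb := hA.bracket
    rw [hξ, one_smul] at hb
    rw [hb, hi, Algebra.algebraMap_eq_smul_one]
  by_cases hc : c = 0
  · -- polynomial case
    left
    refine ⟨hc, ?_⟩
    subst hc
    have hcomm : Commute X Y := by
      have h0 : X * Y - Y * X = 0 := by simpa using hbr
      exact sub_eq_zero.mp h0
    set b := MvPolynomial.basisMonomials (Fin 2) k with hb
    have hbm : ∀ m : Fin 2 →₀ ℕ, b m = MvPolynomial.monomial m 1 := fun m =>
      congrFun (MvPolynomial.coe_basisMonomials (Fin 2) k) m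
    set v : (Fin 2 →₀ ℕ) → A := fun m => X ^ (m 0) * Y ^ (m 1) with hv
    set φ : MvPolynomial (Fin 2) k →ₗ[k] A := Module.Basis.constr b k v with hφ
    have hφb : ∀ m, φ (b m) = v m := fun m => b.constr_basis k v m
    set FL : ((ℕ × ℕ) →₀ k) →ₗ[k] A :=
      Finsupp.linearCombination k (fun p : ℕ × ℕ => X ^ p.1 * Y ^ p.2) with hFL
    have hFLcoe : ∀ f : (ℕ × ℕ) →₀ k,
        FL f = f.sum fun p r => i r * X ^ p.1 * Y ^ p.2 := by
      intro f
      rw [hFL, Finsupp.linearCombination_apply]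
      refine Finsupp.sum_congr fun p _ => ?_
      rw [hi, Algebra.smul_def, mul_assoc]
    have hFLbij : Function.Bijective FL := by
      have hfe : ⇑FL = fun f : (ℕ × ℕ) →₀ k =>
          f.sum fun p r => i r * X ^ p.1 * Y ^ p.2 := funext hFLcoe
      rw [hfe]
      exact hA.free
    set e : (Fin 2 →₀ ℕ) ≃ (ℕ × ℕ) :=
      (Finsupp.equivFunOnFinite.trans (finTwoArrowEquiv ℕ)) with he
    have hφeq : φ = FL ∘ₗ
        (Finsupp.domLCongr e :
          ((Fin 2 →₀ ℕ) →₀ k) ≃ₗ[k] ((ℕ × ℕ) →₀ k)).toLinearMap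
        ∘ₗ (b.repr : MvPolynomial (Fin 2) k ≃ₗ[k] ((Fin 2 →₀ ℕ) →₀ k)).toLinearMap := by
      refine b.ext fun m => ?_
      rw [hφb]
      simp only [LinearMap.coe_comp, Function.comp_apply, LinearEquiv.coe_coe,
        Module.Basis.repr_self, Finsupp.domLCongr_single, hFL,
        Finsupp.linearCombination_single, one_smul]
      simp [he, hv, finTwoArrowEquiv]
    have hφbij : Function.Bijective φ := by
      rw [hφeq]
      simp only [LinearMap.coe_comp, LinearEquiv.coe_coe]
      exact hFLbij.comp ((Finsupp.domLCongr e).bijective.comp b.repr.bijective)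
    have hbmul : ∀ m m' : Fin 2 →₀ ℕ, b m * b m' = b (m + m') := by
      intro m m'
      rw [hbm, hbm, hbm, MvPolynomial.monomial_mul, one_mul]
    have hswap : ∀ a b : ℕ, Y ^ a * X ^ b = X ^ b * Y ^ a := fun a b =>
      (hcomm.symm.pow_pow a b).eq
    have hvmul : ∀ m m' : Fin 2 →₀ ℕ, v (m + m') = v m * v m' := by
      intro m m'
      show X ^ ((m + m') 0) * Y ^ ((m + m') 1)
        = (X ^ (m 0) * Y ^ (m 1)) * (X ^ (m' 0) * Y ^ (m' 1))
      rw [Finsupp.add_apply, Finsupp.add_apply, pow_add, pow_add]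
      calc X ^ m 0 * X ^ m' 0 * (Y ^ m 1 * Y ^ m' 1)
          = X ^ m 0 * (X ^ m' 0 * Y ^ m 1) * Y ^ m' 1 := by
            rw [mul_assoc, mul_assoc, mul_assoc]
        _ = X ^ m 0 * (Y ^ m 1 * X ^ m' 0) * Y ^ m' 1 := by rw [hswap]
        _ = X ^ m 0 * Y ^ m 1 * (X ^ m' 0 * Y ^ m' 1) := by
            rw [mul_assoc, mul_assoc, mul_assoc]
    have hmul : ∀ p q : MvPolynomial (Fin 2) k, φ (p * q) = φ p * φ q := by
      have hLM : LinearMap.compr₂ (LinearMap.mul k (MvPolynomial (Fin 2) k)) φ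
          = LinearMap.compl₁₂ (LinearMap.mul k A) φ φ := by
        refine b.ext fun m => b.ext fun m' => ?_
        simp only [LinearMap.compr₂_apply, LinearMap.mul_apply',
          LinearMap.compl₁₂_apply]
        rw [hbmul, hφb, hφb, hφb, hvmul]
      intro p q
      have := LinearMap.ext_iff.mp (LinearMap.ext_iff.mp hLM p) q
      simpa only [LinearMap.compr₂_apply, LinearMap.mul_apply',
        LinearMap.compl₁₂_apply] using this
    have hone : φ 1 = 1 := by
      have h1 : (1 : MvPolynomial (Fin 2) k) = b 0 := by
        rw [hbm]
        simp [MvPolynomial.monomial_zero']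
      rw [h1, hφb]
      simp [hv]
    exact ⟨(AlgEquiv.ofLinearEquiv (LinearEquiv.ofBijective φ hφbij) hone hmul).symm⟩
  · -- Weyl case
    right
    refine ⟨hc, ?_⟩
    set f0 : FreeAlgebra k (Fin 2) →ₐ[k] A := FreeAlgebra.lift k ![X, c⁻¹ • Y] with hf0
    have hrel : ∀ ⦃u u' : FreeAlgebra k (Fin 2)⦄, weylRel k u u' → f0 u = f0 u' := by
      intro u u' huu'
      cases huu'
      rw [map_sub, map_mul, map_mul, map_one, hf0]
      simp only [FreeAlgebra.lift_ι_apply, Matrix.cons_val_zero, Matrix.cons_val_one,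
        Matrix.head_cons]
      rw [mul_smul_comm, smul_mul_assoc, ← smul_sub, hbr, smul_smul,
        inv_mul_cancel₀ hc, one_smul]
    set ψ : RingQuot (weylRel k) →ₐ[k] A := RingQuot.liftAlgHom k ⟨f0, hrel⟩ with hψ
    have hψx : ψ (Stmt18Aux.wx k) = X := by
      rw [hψ, Stmt18Aux.wx, RingQuot.liftAlgHom_mkAlgHom_apply, hf0]
      simp [FreeAlgebra.lift_ι_apply]
    have hψy : ψ (Stmt18Aux.wy k) = c⁻¹ • Y := by
      rw [hψ, Stmt18Aux.wy, RingQuot.liftAlgHom_mkAlgHom_apply, hf0]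
      simp [FreeAlgebra.lift_ι_apply]
    have hψcy : ψ (c • Stmt18Aux.wy k) = Y := by
      rw [map_smul, hψy, smul_smul, mul_inv_cancel₀ hc, one_smul]
    have hinj : Function.Injective ψ := by
      rw [injective_iff_map_eq_zero]
      intro a ha
      -- `a` lies in the span of the rescaled monomials `x^p (c•y)^q`
      have hmem : a ∈ Submodule.span k
          (Set.range fun pq : ℕ × ℕ =>
            Stmt18Aux.wx k ^ pq.1 * (c • Stmt18Aux.wy k) ^ pq.2) := by
        have h1 := Stmt18Aux.mem_span k a
        refine Submodule.span_le.mpr ?_ h1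
        rintro z ⟨⟨p, q⟩, rfl⟩
        have : Stmt18Aux.wx k ^ p * Stmt18Aux.wy k ^ q
            = (c⁻¹ ^ q) • (Stmt18Aux.wx k ^ p * (c • Stmt18Aux.wy k) ^ q) := by
          rw [smul_pow, mul_smul_comm, smul_smul, ← mul_pow, inv_mul_cancel₀ hc,
            one_pow, one_smul]
        show Stmt18Aux.wx k ^ p * Stmt18Aux.wy k ^ q ∈ _
        rw [this]
        exact Submodule.smul_mem _ _ (Submodule.subset_span ⟨(p, q), rfl⟩)
      obtain ⟨f, hf⟩ := Finsupp.mem_span_range_iff_exists_finsupp.mp hmem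
      have hψa : ψ a = f.sum fun pq r => i r * X ^ pq.1 * Y ^ pq.2 := by
        rw [← hf, map_finsuppSum]
        refine Finsupp.sum_congr fun pq _ => ?_
        rw [map_smul, map_mul, map_pow, map_pow, hψx, hψcy, hi, Algebra.smul_def,
          mul_assoc]
      have hf0' : f = 0 := by
        apply hA.free.injective
        show (f.sum fun p r => i r * X ^ p.1 * Y ^ p.2)
            = ((0 : (ℕ × ℕ) →₀ k).sum fun p r => i r * X ^ p.1 * Y ^ p.2)
        rw [← hψa, ha, Finsupp.sum_zero_index]
      rw [← hf, hf0']
      simp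
    have hsurj : Function.Surjective ψ := by
      intro a
      obtain ⟨f, hf⟩ := hA.free.surjective a
      refine ⟨f.sum fun pq r => r • (Stmt18Aux.wx k ^ pq.1
        * (c • Stmt18Aux.wy k) ^ pq.2), ?_⟩
      rw [map_finsuppSum, ← hf]
      refine Finsupp.sum_congr fun pq _ => ?_
      rw [map_smul, map_mul, map_pow, map_pow, hψx, hψcy, hi, Algebra.smul_def,
        mul_assoc]
    exact ⟨(AlgEquiv.ofBijective ψ ⟨hinj, hsurj⟩).symm⟩
end
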